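/- arXiv:1805.04018 — 3 statements merged into one kernel-verified Lean document; each statement's English description precedes it below -/
import Mathlib

section
/- Representer theorem: Let H be a real Hilbert space, v₁,…,v_N ∈ H, and let L : ℝ^N → ℝ be any function and Ω : ℝ → ℝ strictly increasing. If w* minimizes w ↦ L(⟨w,v₁⟩,…,⟨w,v_N⟩) + Ω(‖w‖) over H, then w* lies in the span of {v₁,…,v_N}. -/
/-! Projecting `w_star` orthogonally onto the span of the `v i` leaves every `⟪w_star, v i⟫`
unchanged and does not increase the norm; minimality and strict monotonicity of `Ω` forbid a drop,
and a vector whose projection has full norm lies in the subspace. -/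

open scoped InnerProductSpace

namespace Submodule

variable {𝕜 E : Type*} [RCLike 𝕜] [NormedAddCommGroup E] [InnerProductSpace 𝕜 E]
  (K : Submodule 𝕜 E) [K.HasOrthogonalProjection]

theorem inner_starProjection_left_of_mem (w : E) {u : E} (hu : u ∈ K) :
    ⟪K.starProjection w, u⟫_𝕜 = ⟪w, u⟫_𝕜 :=
  inner_orthogonalProjectionOnto_eq_of_mem_right ⟨u, hu⟩ w

theorem mem_of_norm_le_norm_starProjection {w : E} (hw : ‖w‖ ≤ ‖K.starProjection w‖) :
    w ∈ K :=
  (K.mem_iff_norm_starProjection w).2 (le_antisymm (K.norm_starProjection_apply_le w) hw)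

end Submodule

theorem representer_theorem_general
    {H : Type*} [NormedAddCommGroup H] [InnerProductSpace ℝ H]
    {N : ℕ} (v : Fin N → H)
    (L : (Fin N → ℝ) → ℝ) (Ω : ℝ → ℝ) (hΩ : StrictMono Ω)
    (w_star : H)
    (hmin : ∀ w : H,
      L (fun i => (inner ℝ w_star (v i) : ℝ)) + Ω ‖w_star‖ ≤
        L (fun i => (inner ℝ w (v i) : ℝ)) + Ω ‖w‖) :
    w_star ∈ Submodule.span ℝ (Set.range v) := by
  set S := Submodule.span ℝ (Set.range v)
  have : FiniteDimensional ℝ S := FiniteDimensional.span_of_finite ℝ (Set.finite_range v)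
  have hdata : (fun i => ⟪S.starProjection w_star, v i⟫_ℝ) = fun i => ⟪w_star, v i⟫_ℝ :=
    funext fun i => S.inner_starProjection_left_of_mem w_star (Submodule.subset_span ⟨i, rfl⟩)
  have hnorm := hmin (S.starProjection w_star)
  rw [hdata, add_le_add_iff_left, hΩ.le_iff_le] at hnorm
  exact S.mem_of_norm_le_norm_starProjection hnorm

theorem representer_theorem
    {H : Type*} [NormedAddCommGroup H] [InnerProductSpace ℝ H] [CompleteSpace H]
    {N : ℕ} (v : Fin N → H)
    (L : (Fin N → ℝ) → ℝ) (Ω : ℝ → ℝ) (hΩ : StrictMono Ω)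
    (w_star : H)
    (hmin : ∀ w : H,
      L (fun i => (inner ℝ w_star (v i) : ℝ)) + Ω ‖w_star‖ ≤
        L (fun i => (inner ℝ w (v i) : ℝ)) + Ω ‖w‖) :
    w_star ∈ Submodule.span ℝ (Set.range v) :=
  representer_theorem_general v L Ω hΩ w_star hmin
end

section
/- Soft-margin SVM solution subspace: if (w,b) is an optimal solution of the soft-margin SVM with KKT multipliers α, then w lies in the span of {φ(xᵢ) : yᵢ(⟨w,φ(xᵢ)⟩+b) ≤ 1}, i.e. the span of the samples whose (negative) margin satisfies −yᵢ(⟨w,φ(xᵢ)⟩+b) ≥ −1. -/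
open Finset

theorem Submodule.sum_smul_mem_span_of_ne_zero {ι R M : Type*} [Semiring R] [AddCommMonoid M]
    [Module R M] (s : Finset ι) (c : ι → R) (v : ι → M) (p : ι → Prop)
    (hc : ∀ i, c i ≠ 0 → p i) :
    ∑ i ∈ s, c i • v i ∈ Submodule.span R {x : M | ∃ i, p i ∧ x = v i} := by
  refine Submodule.sum_mem _ fun i _ => ?_
  by_cases hi : c i = 0
  · simp only [hi, zero_smul, Submodule.zero_mem]
  · exact Submodule.smul_mem _ _ (Submodule.subset_span ⟨i, hc i hi, rfl⟩)

theorem svm_solution_in_span_of_low_margin_samples_general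
    {H : Type*} [NormedAddCommGroup H] [InnerProductSpace ℝ H]
    {N : ℕ} (φ : Fin N → H) (y : Fin N → ℝ)
    (w : H) (b : ℝ) (α : Fin N → ℝ)
    (hstat : w = ∑ i, (y i * α i) • φ i)
    (hzero : ∀ i, 1 < y i * ((inner ℝ w (φ i) : ℝ) + b) → α i = 0) :
    w ∈ Submodule.span ℝ {v : H | ∃ i, y i * ((inner ℝ w (φ i) : ℝ) + b) ≤ 1 ∧ v = φ i} := by
  have hsupport : ∀ i, y i * α i ≠ 0 → y i * ((inner ℝ w (φ i) : ℝ) + b) ≤ 1 := fun i hi =>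
    le_of_not_gt fun hgt => right_ne_zero_of_mul hi (hzero i hgt)
  have hmem := Submodule.sum_smul_mem_span_of_ne_zero univ (fun i => y i * α i) φ
    (fun i => y i * ((inner ℝ w (φ i) : ℝ) + b) ≤ 1) hsupport
  rwa [← hstat] at hmem

theorem svm_solution_in_span_of_low_margin_samples
    {H : Type*} [NormedAddCommGroup H] [InnerProductSpace ℝ H]
    {N : ℕ} (φ : Fin N → H) (y : Fin N → ℝ) (hy : ∀ i, y i = 1 ∨ y i = -1)
    (w : H) (b : ℝ) (α : Fin N → ℝ)
    (hstat : w = ∑ i, (y i * α i) • φ i)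
    (hzero : ∀ i, 1 < y i * ((inner ℝ w (φ i) : ℝ) + b) → α i = 0) :
    w ∈ Submodule.span ℝ {v : H | ∃ i, y i * ((inner ℝ w (φ i) : ℝ) + b) ≤ 1 ∧ v = φ i} :=
  svm_solution_in_span_of_low_margin_samples_general φ y w b α hstat hzero
end

section
/- Monotonicity of Nyström approximation under subset inclusion: let K = ΦᵀΦ be PSD, and let S ⊆ T be index subsets such that both K(S,S) and K(T,T) are invertible. Then the Nyström approximations satisfy K̃_S ⪯ K̃_T ⪯ K in the Loewner order, where K̃_S = K(:,S)K(S,S)⁻¹K(S,:). -/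
/-!
With `K = Φᴴ Φ`, the Nyström approximation on an index set `S` is `Φᴴ P_S Φ`, where
`P_S = Φ_S (Φ_Sᴴ Φ_S)⁻¹ Φ_Sᴴ` is the orthogonal projection onto the column span of `Φ_S`.
For `S ⊆ T` the columns of `Φ_S` are among those of `Φ_T`, so `P_T P_S = P_S`; hence `P_T - P_S`,
like `1 - P_T`, is again an orthogonal projection `P`, and `Φᴴ P Φ = (P Φ)ᴴ (P Φ)` is positive
semidefinite.
-/

open Matrix
open scoped ComplexOrder

namespace Matrix

variable {m n ι κ 𝕜 : Type*} [RCLike 𝕜]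

theorem posSemidef_conjTranspose_mul_mul_of_isStarProjection [Fintype m] [Fintype n]
    {P : Matrix m m 𝕜} (hP : IsStarProjection P) (Φ : Matrix m n 𝕜) :
    (Φᴴ * P * Φ).PosSemidef := by
  have hP_gram : P = Pᴴ * P := by
    rw [← star_eq_conjTranspose, hP.isSelfAdjoint.star_eq, hP.isIdempotentElem.eq]
  rw [hP_gram]
  exact (posSemidef_conjTranspose_mul_self P).conjTranspose_mul_mul_same Φ

noncomputable def columnProjection [Fintype m] [Fintype ι] [DecidableEq ι]
    (A : Matrix m ι 𝕜) : Matrix m m 𝕜 :=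
  A * (Aᴴ * A)⁻¹ * Aᴴ

section columnProjection

variable [Fintype m] [Fintype ι] [DecidableEq ι] {A : Matrix m ι 𝕜}

theorem columnProjection_mul_self (hA : IsUnit (Aᴴ * A)) : columnProjection A * A = A := by
  rw [columnProjection, Matrix.mul_assoc, Matrix.mul_assoc,
    nonsing_inv_mul _ ((isUnit_iff_isUnit_det _).mp hA), Matrix.mul_one]

theorem isStarProjection_columnProjection (hA : IsUnit (Aᴴ * A)) :
    IsStarProjection (columnProjection A) where
  isIdempotentElem := by
    change columnProjection A * (A * (Aᴴ * A)⁻¹ * Aᴴ) = A * (Aᴴ * A)⁻¹ * Aᴴ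
    rw [← Matrix.mul_assoc, ← Matrix.mul_assoc, columnProjection_mul_self hA]
  isSelfAdjoint := by
    simp only [IsSelfAdjoint, star_eq_conjTranspose, columnProjection, conjTranspose_mul,
      conjTranspose_nonsing_inv, conjTranspose_conjTranspose, Matrix.mul_assoc]

theorem columnProjection_mul_columnProjection_submatrix [Fintype κ] [DecidableEq κ]
    (hA : IsUnit (Aᴴ * A)) (e : κ → ι) :
    columnProjection A * columnProjection (A.submatrix id e) =
      columnProjection (A.submatrix id e) := by
  have hsub : columnProjection A * A.submatrix id e = A.submatrix id e := by
    simpa [columnProjection_mul_self hA] using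
      (submatrix_mul (columnProjection A) A id id e Function.bijective_id).symm
  simp only [columnProjection, ← Matrix.mul_assoc] at hsub ⊢
  rw [hsub]

end columnProjection

noncomputable def nystrom [Fintype ι] [DecidableEq ι] (K : Matrix n n 𝕜) (e : ι → n) :
    Matrix n n 𝕜 :=
  K.submatrix id e * (K.submatrix e e)⁻¹ * K.submatrix e id

theorem submatrix_conjTranspose_mul_self [Fintype m] (Φ : Matrix m n 𝕜) (e₁ : ι → n)
    (e₂ : κ → n) :
    (Φᴴ * Φ).submatrix e₁ e₂ = (Φ.submatrix id e₁)ᴴ * Φ.submatrix id e₂ := by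
  rw [submatrix_mul _ _ _ id _ Function.bijective_id, conjTranspose_submatrix]

theorem nystrom_conjTranspose_mul_self [Fintype m] [Fintype ι] [DecidableEq ι]
    (Φ : Matrix m n 𝕜) (e : ι → n) :
    nystrom (Φᴴ * Φ) e = Φᴴ * columnProjection (Φ.submatrix id e) * Φ := by
  rw [nystrom, submatrix_conjTranspose_mul_self, submatrix_conjTranspose_mul_self,
    submatrix_conjTranspose_mul_self]
  simp only [submatrix_id_id, columnProjection, Matrix.mul_assoc]

section Gram

variable [Fintype m] [Fintype n] [Fintype ι] [DecidableEq ι] (Φ : Matrix m n 𝕜)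

theorem conjTranspose_mul_self_sub_nystrom_posSemidef [DecidableEq m] {e : ι → n}
    (he : IsUnit ((Φᴴ * Φ).submatrix e e)) :
    (Φᴴ * Φ - nystrom (Φᴴ * Φ) e).PosSemidef := by
  rw [submatrix_conjTranspose_mul_self] at he
  have hP := (isStarProjection_columnProjection he).one_sub
  rw [nystrom_conjTranspose_mul_self]
  simpa only [Matrix.mul_sub, Matrix.sub_mul, Matrix.mul_one] using
    posSemidef_conjTranspose_mul_mul_of_isStarProjection hP Φ

theorem nystrom_sub_nystrom_comp_posSemidef [Fintype κ] [DecidableEq κ] {f : ι → n}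
    (g : κ → ι) (hf : IsUnit ((Φᴴ * Φ).submatrix f f))
    (hfg : IsUnit ((Φᴴ * Φ).submatrix (f ∘ g) (f ∘ g))) :
    (nystrom (Φᴴ * Φ) f - nystrom (Φᴴ * Φ) (f ∘ g)).PosSemidef := by
  rw [submatrix_conjTranspose_mul_self] at hf hfg
  have hP := (isStarProjection_columnProjection hfg).sub_of_mul_eq_right
    (isStarProjection_columnProjection hf)
    (columnProjection_mul_columnProjection_submatrix hf g)
  rw [nystrom_conjTranspose_mul_self, nystrom_conjTranspose_mul_self]
  simpa only [Matrix.mul_sub, Matrix.sub_mul] using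
    posSemidef_conjTranspose_mul_mul_of_isStarProjection hP Φ

end Gram

end Matrix

theorem nystrom_monotone_in_subset
    {N d : ℕ} (Φ : Matrix (Fin d) (Fin N) ℝ) (K : Matrix (Fin N) (Fin N) ℝ)
    (hK : K = Φᵀ * Φ)
    (S T : Finset (Fin N)) (hST : S ⊆ T)
    (hSinv : IsUnit (K.submatrix (fun i : {i // i ∈ S} => i.val) (fun i : {i // i ∈ S} => i.val)))
    (hTinv : IsUnit (K.submatrix (fun i : {i // i ∈ T} => i.val) (fun i : {i // i ∈ T} => i.val)))
    (KS KT : Matrix (Fin N) (Fin N) ℝ)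
    (hKS : KS = K.submatrix id (fun i : {i // i ∈ S} => i.val) *
      (K.submatrix (fun i : {i // i ∈ S} => i.val) (fun i : {i // i ∈ S} => i.val))⁻¹ *
      K.submatrix (fun i : {i // i ∈ S} => i.val) id)
    (hKT : KT = K.submatrix id (fun i : {i // i ∈ T} => i.val) *
      (K.submatrix (fun i : {i // i ∈ T} => i.val) (fun i : {i // i ∈ T} => i.val))⁻¹ *
      K.submatrix (fun i : {i // i ∈ T} => i.val) id) :
    (KT - KS).PosSemidef ∧ (K - KT).PosSemidef := by
  rw [← conjTranspose_eq_transpose_of_trivial] at hK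
  subst hK hKS hKT
  exact ⟨nystrom_sub_nystrom_comp_posSemidef Φ (Set.inclusion hST) hTinv hSinv,
    conjTranspose_mul_self_sub_nystrom_posSemidef Φ hTinv⟩
end
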